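/- arXiv:2312.04103 — 2 statements merged into one kernel-verified Lean document; each statement's English description precedes it below -/
import Mathlib

section
/- Let 𝒳 and 𝒴 be finite nonempty types, let π be a strictly positive pmf on 𝒳 × 𝒴 with marginal π_X(x) := ∑_y π(x,y), and define the conditional entropy H(Y|X) := -∑_{x,y} π(x,y) · log(π(x,y)/π_X(x)). Let g : 𝒳 → 𝒳 (the generator) and let q_t, q̂ : 𝒳 → 𝒴 → ℝ be kernels such that for every x ∈ 𝒳 the functions q_t(x) and q̂(x) are strictly positive pmfs on 𝒴. Assume the three cross-entropies all attain the lower bound H(Y|X): (i) -∑_{x,y} π(x,y) · log(q_t(x)(y)) = H(Y|X); (ii) -∑_{x,y} π(x,y) · log(q_t(g(x))(y)) = H(Y|X); (iii) -∑_{x,y} π(x,y) · log(q̂(g(x))(y)) = H(Y|X). Then for every x ∈ 𝒳 and y ∈ 𝒴 one has q̂(g(x))(y) = π(x,y)/π_X(x) = q_t(x)(y) = q_t(g(x))(y); in particular the prediction obtained by applying the predictor q̂ to the rationale g(x) has conditional law given X = x equal to the conditional law of Y given X = x. -/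
lemma gibbs_point {a q s : ℝ} (ha : 0 < a) (hq : 0 < q) (hs : 0 < s) :
    a * Real.log q - a * Real.log (a / s) ≤ q * s - a ∧
    (a * Real.log q - a * Real.log (a / s) = q * s - a → q = a / s) := by
  have ht : 0 < q * s / a := by positivity
  have hlogt : Real.log (q * s / a) = Real.log q - Real.log (a / s) := by
    rw [Real.log_div (by positivity) ha.ne', Real.log_div ha.ne' hs.ne',
      Real.log_mul hq.ne' hs.ne']
    ring
  have hmul : a * (q * s / a) = q * s := by field_simp
  constructor
  · have h := Real.log_le_sub_one_of_pos ht
    have h' := mul_le_mul_of_nonneg_left h ha.le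
    calc a * Real.log q - a * Real.log (a / s)
        = a * Real.log (q * s / a) := by rw [hlogt]; ring
      _ ≤ a * (q * s / a - 1) := h'
      _ = q * s - a := by rw [mul_sub, mul_one, hmul]
  · intro heq
    have h1 : a * Real.log (q * s / a) = a * (q * s / a - 1) := by
      rw [hlogt, mul_sub a (Real.log q), mul_sub, mul_one, hmul]; linarith
    have h2 : Real.log (q * s / a) = q * s / a - 1 :=
      mul_left_cancel₀ ha.ne' h1
    by_contra hne
    have hne1 : q * s / a ≠ 1 := by
      intro h; apply hne
      field_simp at h ⊢
      linarith
    have hlogne : Real.log (q * s / a) ≠ 0 := by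
      intro h
      rcases Real.log_eq_zero.mp h with h' | h' | h'
      · linarith
      · exact hne1 h'
      · linarith
    have := Real.add_one_lt_exp hlogne
    rw [Real.exp_log ht] at this
    linarith

lemma gibbs_sum {𝒴 : Type*} [Fintype 𝒴] [Nonempty 𝒴] (p q : 𝒴 → ℝ)
    (hp : ∀ y, 0 < p y) (hq : ∀ y, 0 < q y) (hq1 : ∑ y, q y = 1) :
    ∑ y, p y * Real.log (q y) ≤ ∑ y, p y * Real.log (p y / ∑ y', p y') ∧
    ((∑ y, p y * Real.log (q y) = ∑ y, p y * Real.log (p y / ∑ y', p y')) →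
      ∀ y, q y = p y / ∑ y', p y') := by
  set s := ∑ y', p y' with hs_def
  have hs : 0 < s := Finset.sum_pos (fun y _ => hp y) Finset.univ_nonempty
  have hsum0 : ∑ y, (q y * s - p y) = 0 := by
    rw [Finset.sum_sub_distrib, ← Finset.sum_mul, hq1, one_mul, ← hs_def]
    ring
  have hle : ∀ y ∈ Finset.univ, p y * Real.log (q y) - p y * Real.log (p y / s)
      ≤ q y * s - p y := fun y _ => (gibbs_point (hp y) (hq y) hs).1
  have hmain : ∑ y, (p y * Real.log (q y) - p y * Real.log (p y / s)) ≤ 0 := by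
    calc ∑ y, (p y * Real.log (q y) - p y * Real.log (p y / s))
        ≤ ∑ y, (q y * s - p y) := Finset.sum_le_sum hle
      _ = 0 := hsum0
  rw [Finset.sum_sub_distrib] at hmain
  constructor
  · linarith
  · intro heq y
    have hzero : ∀ z ∈ Finset.univ,
        (q z * s - p z) - (p z * Real.log (q z) - p z * Real.log (p z / s)) = 0 := by
      apply (Finset.sum_eq_zero_iff_of_nonneg (fun z _ => by
        have := (gibbs_point (hp z) (hq z) hs).1; linarith)).mp
      rw [Finset.sum_sub_distrib, hsum0, Finset.sum_sub_distrib]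
      linarith
    have := hzero y (Finset.mem_univ y)
    exact (gibbs_point (hp y) (hq y) hs).2 (by linarith)

/-- Paper's Theorem 1: if the pretraining objective, the discriminative alignment
objective, and the original rationalization objective all attain the conditional
entropy lower bound, then the predictor's output on the rationale `g x` equals the
true posterior `π x y / π_X x`, which also equals the pretrained predictor's output
on both `x` and `g x`. -/
theorem dar_theorem1 {𝒳 𝒴 : Type*} [Fintype 𝒳] [Fintype 𝒴] [Nonempty 𝒳] [Nonempty 𝒴]
    (π : 𝒳 → 𝒴 → ℝ)
    (hπpos : ∀ x y, 0 < π x y)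
    (hπsum : ∑ x, ∑ y, π x y = 1)
    (g : 𝒳 → 𝒳)
    (qt qhat : 𝒳 → 𝒴 → ℝ)
    (hqtpos : ∀ x y, 0 < qt x y) (hqtsum : ∀ x, ∑ y, qt x y = 1)
    (hqhpos : ∀ x y, 0 < qhat x y) (hqhsum : ∀ x, ∑ y, qhat x y = 1)
    -- (i) pretraining objective attains the entropy lower bound H(Y|X)
    (h1 : -∑ x, ∑ y, π x y * Real.log (qt x y)
        = -∑ x, ∑ y, π x y * Real.log (π x y / (∑ y', π x y')))
    -- (ii) discriminative alignment objective attains the lower bound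
    (h2 : -∑ x, ∑ y, π x y * Real.log (qt (g x) y)
        = -∑ x, ∑ y, π x y * Real.log (π x y / (∑ y', π x y')))
    -- (iii) original rationalization objective attains the lower bound
    (h3 : -∑ x, ∑ y, π x y * Real.log (qhat (g x) y)
        = -∑ x, ∑ y, π x y * Real.log (π x y / (∑ y', π x y'))) :
    ∀ x y, qhat (g x) y = π x y / (∑ y', π x y')
      ∧ π x y / (∑ y', π x y') = qt x y
      ∧ qt x y = qt (g x) y := by
  have key : ∀ (Q : 𝒳 → 𝒴 → ℝ), (∀ x y, 0 < Q x y) → (∀ x, ∑ y, Q x y = 1) →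
      (-∑ x, ∑ y, π x y * Real.log (Q x y)
        = -∑ x, ∑ y, π x y * Real.log (π x y / (∑ y', π x y'))) →
      ∀ x y, Q x y = π x y / (∑ y', π x y') := by
    intro Q hQpos hQsum hEq
    have hEq' : ∑ x, ∑ y, π x y * Real.log (Q x y)
        = ∑ x, ∑ y, π x y * Real.log (π x y / (∑ y', π x y')) := by linarith
    have hle : ∀ x ∈ Finset.univ, ∑ y, π x y * Real.log (Q x y)
        ≤ ∑ y, π x y * Real.log (π x y / (∑ y', π x y')) := fun x _ =>
      (gibbs_sum (π x) (Q x) (hπpos x) (hQpos x) (hQsum x)).1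
    have hzero : ∀ x ∈ Finset.univ,
        (∑ y, π x y * Real.log (π x y / (∑ y', π x y')))
          - ∑ y, π x y * Real.log (Q x y) = 0 := by
      apply (Finset.sum_eq_zero_iff_of_nonneg (fun x _ => by
        have := hle x (Finset.mem_univ x); linarith)).mp
      rw [Finset.sum_sub_distrib]
      linarith
    intro x
    exact (gibbs_sum (π x) (Q x) (hπpos x) (hQpos x) (hQsum x)).2
      (by have := hzero x (Finset.mem_univ x); linarith)
  have k1 := key qt hqtpos hqtsum h1
  have k2 := key (fun x => qt (g x)) (fun x y => hqtpos (g x) y) (fun x => hqtsum (g x)) h2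
  have k3 := key (fun x => qhat (g x)) (fun x y => hqhpos (g x) y) (fun x => hqhsum (g x)) h3
  intro x y
  exact ⟨k3 x y, (k1 x y).symm, (k1 x y).trans (k2 x y).symm⟩
end

section
/- Let 𝒳 and 𝒴 be finite nonempty types, let π be a strictly positive pmf on 𝒳 × 𝒴 with marginal π_X(x) := ∑_y π(x,y), and define H(Y|X) := -∑_{x,y} π(x,y) · log(π(x,y)/π_X(x)). Let g : 𝒳 → 𝒳 and let q_t : 𝒳 → 𝒴 → ℝ be a kernel such that for every x ∈ 𝒳 the function q_t(x) is a strictly positive pmf on 𝒴. Assume (i) -∑_{x,y} π(x,y) · log(q_t(x)(y)) = H(Y|X) and (ii) -∑_{x,y} π(x,y) · log(q_t(g(x))(y)) = H(Y|X). Then for every x ∈ 𝒳 and y ∈ 𝒴 one has q_t(g(x))(y) = q_t(x)(y), and both equal the posterior π(x,y)/π_X(x). -/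
lemma gibbs_eq {ι : Type*} [Fintype ι] (w a b : ι → ℝ)
    (hw : ∀ i, 0 < w i) (ha : ∀ i, 0 < a i) (hb : ∀ i, 0 < b i)
    (hsum : ∑ i, w i * (b i / a i) = ∑ i, w i)
    (hlog : ∑ i, w i * Real.log (b i) = ∑ i, w i * Real.log (a i)) :
    ∀ i, b i = a i := by
  have hle : ∀ i ∈ Finset.univ, w i * Real.log (b i / a i) ≤ w i * (b i / a i - 1) := by
    intro i _
    exact mul_le_mul_of_nonneg_left
      (Real.log_le_sub_one_of_pos (div_pos (hb i) (ha i))) (hw i).le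
  have hseq : ∑ i, w i * Real.log (b i / a i) = ∑ i, w i * (b i / a i - 1) := by
    have l : ∑ i, w i * Real.log (b i / a i) = 0 := by
      have : ∀ i, w i * Real.log (b i / a i) = w i * Real.log (b i) - w i * Real.log (a i) := by
        intro i
        rw [Real.log_div (hb i).ne' (ha i).ne']; ring
      simp_rw [this, Finset.sum_sub_distrib, hlog, sub_self]
    have r : ∑ i, w i * (b i / a i - 1) = 0 := by
      simp_rw [mul_sub, mul_one, Finset.sum_sub_distrib, hsum, sub_self]
    rw [l, r]
  have heach := (Finset.sum_eq_sum_iff_of_le hle).mp hseq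
  intro i
  have h := heach i (Finset.mem_univ i)
  have h' : Real.log (b i / a i) = b i / a i - 1 := by
    exact mul_left_cancel₀ (hw i).ne' h
  by_contra hne
  have hd : b i / a i ≠ 1 := by
    intro h1
    exact hne ((div_eq_one_iff_eq (ha i).ne').mp h1)
  exact absurd h' (ne_of_lt (Real.log_lt_sub_one_of_pos (div_pos (hb i) (ha i)) hd))

/-- Intermediate step (equations (14)–(16)) in the proof of the paper's Theorem 1:
when the pretraining objective and the discriminative alignment objective both
attain the entropy lower bound, the pretrained predictor gives the same output on
the full input x and on the rationale g x, both equal to the posterior. -/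
theorem dar_theorem1_step {𝒳 𝒴 : Type*} [Fintype 𝒳] [Fintype 𝒴] [Nonempty 𝒳] [Nonempty 𝒴]
    (π : 𝒳 → 𝒴 → ℝ)
    (hπpos : ∀ x y, 0 < π x y)
    (hπsum : ∑ x, ∑ y, π x y = 1)
    (g : 𝒳 → 𝒳)
    (qt : 𝒳 → 𝒴 → ℝ)
    (hqtpos : ∀ x y, 0 < qt x y) (hqtsum : ∀ x, ∑ y, qt x y = 1)
    (h1 : -∑ x, ∑ y, π x y * Real.log (qt x y)
        = -∑ x, ∑ y, π x y * Real.log (π x y / (∑ y', π x y')))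
    (h2 : -∑ x, ∑ y, π x y * Real.log (qt (g x) y)
        = -∑ x, ∑ y, π x y * Real.log (π x y / (∑ y', π x y'))) :
    ∀ x y, qt (g x) y = qt x y ∧ qt x y = π x y / (∑ y', π x y') := by
  have hα : ∀ x, 0 < ∑ y', π x y' := fun x =>
    Finset.sum_pos (fun y _ => hπpos x y) Finset.univ_nonempty
  set a : 𝒳 × 𝒴 → ℝ := fun p => π p.1 p.2 / (∑ y', π p.1 y') with ha_def
  have hapos : ∀ p : 𝒳 × 𝒴, 0 < a p := fun p => div_pos (hπpos p.1 p.2) (hα p.1)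
  have hw : ∀ p : 𝒳 × 𝒴, 0 < π p.1 p.2 := fun p => hπpos p.1 p.2
  -- common sum computation
  have hswap : ∀ f : 𝒳 → 𝒴 → ℝ,
      ∑ p : 𝒳 × 𝒴, π p.1 p.2 * (f p.1 p.2 / a p) = ∑ p : 𝒳 × 𝒴, π p.1 p.2 →
      True := fun _ _ => trivial
  have hsum1 : ∀ q : 𝒳 → 𝒴 → ℝ, (∀ x, ∑ y, q x y = 1) →
      ∑ p : 𝒳 × 𝒴, π p.1 p.2 * (q p.1 p.2 / a p) = ∑ p : 𝒳 × 𝒴, π p.1 p.2 := by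
    intro q hq
    rw [Fintype.sum_prod_type, Fintype.sum_prod_type]
    congr 1; ext x
    have : ∀ y, π x y * (q x y / a (x, y)) = (∑ y', π x y') * q x y := by
      intro y
      have hne := (hπpos x y).ne'
      simp only [ha_def]
      field_simp
    simp_rw [this, ← Finset.mul_sum, hq x, mul_one]
  have hloga : ∀ q : 𝒳 → 𝒴 → ℝ,
      (-∑ x, ∑ y, π x y * Real.log (q x y)
        = -∑ x, ∑ y, π x y * Real.log (π x y / (∑ y', π x y'))) →
      ∑ p : 𝒳 × 𝒴, π p.1 p.2 * Real.log (q p.1 p.2)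
        = ∑ p : 𝒳 × 𝒴, π p.1 p.2 * Real.log (a p) := by
    intro q hq
    rw [Fintype.sum_prod_type, Fintype.sum_prod_type]
    simpa using neg_injective hq
  have key1 := gibbs_eq (fun p : 𝒳 × 𝒴 => π p.1 p.2) a (fun p => qt p.1 p.2)
    hw hapos (fun p => hqtpos p.1 p.2) (hsum1 qt hqtsum) (hloga qt h1)
  have key2 := gibbs_eq (fun p : 𝒳 × 𝒴 => π p.1 p.2) a (fun p => qt (g p.1) p.2)
    hw hapos (fun p => hqtpos (g p.1) p.2)
    (hsum1 (fun x => qt (g x)) (fun x => hqtsum (g x))) (hloga (fun x => qt (g x)) h2)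
  intro x y
  have e1 := key1 (x, y)
  have e2 := key2 (x, y)
  simp only at e1 e2
  exact ⟨e2.trans e1.symm, e1⟩
end
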